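/- Let {J,E} be a complex product structure on a real Lie algebra g and let ∇ be the associated torsion-free connection. For θ ∈ ℝ set E_θ := cos θ · E + sin θ · JE, which is again a product structure on g anticommuting with J. Then ∇ is parallel with respect to E_θ, i.e. ∇ₓ(E_θ y) = E_θ (∇ₓ y) for all x,y ∈ g; consequently the torsion-free connection ∇^θ associated to the complex product structure {J, E_θ} coincides with ∇. -/

import Mathlib

open Module LinearMap

variable {g : Type*} [LieRing g] [LieAlgebra ℝ g]

/-- A complex structure on a real Lie algebra: `J² = -id` and integrability. -/
def IsComplexStr (J : Module.End ℝ g) : Prop :=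
  (∀ x : g, J (J x) = -x) ∧
  (∀ x y : g, J ⁅x, y⁆ = ⁅J x, y⁆ + ⁅x, J y⁆ + J ⁅J x, J y⁆)

/-- A product structure on a real Lie algebra: `E² = id`, `E ≠ ±id` and integrability. -/
def IsProductStr (E : Module.End ℝ g) : Prop :=
  (∀ x : g, E (E x) = x) ∧ E ≠ LinearMap.id ∧ E ≠ -LinearMap.id ∧
  (∀ x y : g, E ⁅x, y⁆ = ⁅E x, y⁆ + ⁅x, E y⁆ - E ⁅E x, E y⁆)

/-- A complex product structure: a complex structure and a product structure
that anticommute. -/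
def IsCPS (J E : Module.End ℝ g) : Prop :=
  IsComplexStr J ∧ IsProductStr E ∧ ∀ x : g, J (E x) = -E (J x)

/-- The +1-eigenspace `g₊` of a product structure. -/
def posPart (E : Module.End ℝ g) : Submodule ℝ g where
  carrier := {x | E x = x}
  zero_mem' := by simp
  add_mem' := by
    intro a b ha hb
    simp only [Set.mem_setOf_eq, map_add] at *
    rw [ha, hb]
  smul_mem' := by
    intro c a ha
    simp only [Set.mem_setOf_eq, map_smul] at *
    rw [ha]

/-- The −1-eigenspace `g₋` of a product structure. -/
def negPart (E : Module.End ℝ g) : Submodule ℝ g where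
  carrier := {x | E x = -x}
  zero_mem' := by simp
  add_mem' := by
    intro a b ha hb
    simp only [Set.mem_setOf_eq, map_add] at *
    rw [ha, hb]; abel
  smul_mem' := by
    intro c a ha
    simp only [Set.mem_setOf_eq, map_smul] at *
    rw [ha, smul_neg]

/-- The projection `π₊ : g → g₊` associated to a product structure. -/
noncomputable def pplus (E : Module.End ℝ g) : Module.End ℝ g :=
  (1 / 2 : ℝ) • (LinearMap.id + E)

/-- The projection `π₋ : g → g₋` associated to a product structure. -/
noncomputable def pminus (E : Module.End ℝ g) : Module.End ℝ g :=
  (1 / 2 : ℝ) • (LinearMap.id - E)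

attribute [local instance 100] LieRing.ofAssociativeRing

/-- Auxiliary: the linear map `x ↦ A ∘ ad(P x) ∘ B`. -/
noncomputable def connTerm (A B P : Module.End ℝ g) : g →ₗ[ℝ] Module.End ℝ g :=
  (LinearMap.llcomp ℝ g g g A ∘ₗ LinearMap.lcomp ℝ g B) ∘ₗ
    (LieAlgebra.ad ℝ g).toLinearMap ∘ₗ P

/-- The torsion-free connection associated to a complex product structure `{J, E}`.
Its value `cpConn J E x y` equals
`−π₊ J ⁅π₊x, J π₊y⁆ − π₋ J ⁅π₋x, J π₋y⁆ + π₋ ⁅π₊x, π₋y⁆ + π₊ ⁅π₋x, π₊y⁆`,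
which encodes the defining identities `∇_{x₊} y₊ = −π₊ J ⁅x₊, J y₊⁆`,
`∇_{x₋} y₋ = −π₋ J ⁅x₋, J y₋⁆`, `∇_{x₊} y₋ = π₋ ⁅x₊, y₋⁆`, `∇_{x₋} y₊ = π₊ ⁅x₋, y₊⁆`. -/
noncomputable def cpConn (J E : Module.End ℝ g) : g →ₗ[ℝ] Module.End ℝ g :=
  -connTerm (pplus E ∘ₗ J) (J ∘ₗ pplus E) (pplus E)
    - connTerm (pminus E ∘ₗ J) (J ∘ₗ pminus E) (pminus E)
    + connTerm (pminus E) (pminus E) (pplus E)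
    + connTerm (pplus E) (pplus E) (pminus E)

lemma cpConn_apply (J E : Module.End ℝ g) (x y : g) :
    cpConn J E x y =
      -(pplus E (J ⁅pplus E x, J (pplus E y)⁆))
      - pminus E (J ⁅pminus E x, J (pminus E y)⁆)
      + pminus E ⁅pplus E x, pminus E y⁆
      + pplus E ⁅pminus E x, pplus E y⁆ := rfl

lemma pplus_apply' (E : Module.End ℝ g) (x : g) :
    pplus E x = (1/2 : ℝ) • (x + E x) := rfl
lemma pminus_apply' (E : Module.End ℝ g) (x : g) :
    pminus E x = (1/2 : ℝ) • (x - E x) := rfl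

section core
variable {J E : Module.End ℝ g}

lemma E_pplus (hE2 : ∀ x : g, E (E x) = x) (x : g) :
    E (pplus E x) = pplus E x := by
  rw [pplus_apply', map_smul, map_add, hE2]; module

lemma E_pminus (hE2 : ∀ x : g, E (E x) = x) (x : g) :
    E (pminus E x) = -(pminus E x) := by
  rw [pminus_apply', map_smul, map_sub, hE2]; module

lemma pplus_E (hE2 : ∀ x : g, E (E x) = x) (x : g) :
    pplus E (E x) = pplus E x := by
  rw [pplus_apply', pplus_apply', hE2]; module

lemma pminus_E (hE2 : ∀ x : g, E (E x) = x) (x : g) :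
    pminus E (E x) = -(pminus E x) := by
  rw [pminus_apply', pminus_apply', hE2]; module

lemma pplus_J (hA : ∀ x : g, J (E x) = -E (J x)) (x : g) :
    pplus E (J x) = J (pminus E x) := by
  have h : E (J x) = -(J (E x)) := by rw [hA, neg_neg]
  rw [pplus_apply', pminus_apply', map_smul, map_sub, h]; module

lemma pminus_J (hA : ∀ x : g, J (E x) = -E (J x)) (x : g) :
    pminus E (J x) = J (pplus E x) := by
  have h : E (J x) = -(J (E x)) := by rw [hA, neg_neg]
  rw [pminus_apply', pplus_apply', map_smul, map_add, h]; module

lemma pplus_add_pminus (E : Module.End ℝ g) (x : g) :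
    pplus E x + pminus E x = x := by
  rw [pplus_apply', pminus_apply']; module

lemma plusBr (hEi : ∀ x y : g, E ⁅x, y⁆ = ⁅E x, y⁆ + ⁅x, E y⁆ - E ⁅E x, E y⁆)
    {a c : g} (ha : E a = a) (hc : E c = c) : E ⁅a, c⁆ = ⁅a, c⁆ := by
  have h := hEi a c
  rw [ha, hc] at h
  have h2 : (2 : ℝ) • E ⁅a, c⁆ = (2 : ℝ) • ⁅a, c⁆ := by
    rw [two_smul, two_smul]
    calc E ⁅a,c⁆ + E ⁅a,c⁆ = (⁅a, c⁆ + ⁅a, c⁆ - E ⁅a, c⁆) + E ⁅a,c⁆ := by rw [← h]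
    _ = ⁅a,c⁆ + ⁅a,c⁆ := by abel
  exact smul_right_injective g two_ne_zero h2

lemma minusBr (hEi : ∀ x y : g, E ⁅x, y⁆ = ⁅E x, y⁆ + ⁅x, E y⁆ - E ⁅E x, E y⁆)
    {a c : g} (ha : E a = -a) (hc : E c = -c) : E ⁅a, c⁆ = -⁅a, c⁆ := by
  have h := hEi a c
  rw [ha, hc] at h
  simp only [neg_lie, lie_neg, neg_neg] at h
  have h2 : (2 : ℝ) • E ⁅a, c⁆ = (2 : ℝ) • (-⁅a, c⁆) := by
    rw [two_smul, two_smul]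
    calc E ⁅a,c⁆ + E ⁅a,c⁆ = (-⁅a, c⁆ + -⁅a, c⁆ - E ⁅a, c⁆) + E ⁅a,c⁆ := by rw [← h]
    _ = -⁅a,c⁆ + -⁅a,c⁆ := by abel
  exact smul_right_injective g two_ne_zero h2

end core

section core2
variable {J E : Module.End ℝ g}

lemma keyJ (hJ2 : ∀ x : g, J (J x) = -x)
    (hJi : ∀ x y : g, J ⁅x, y⁆ = ⁅J x, y⁆ + ⁅x, J y⁆ + J ⁅J x, J y⁆)
    (hEi : ∀ x y : g, E ⁅x, y⁆ = ⁅E x, y⁆ + ⁅x, E y⁆ - E ⁅E x, E y⁆)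
    (hA : ∀ x : g, J (E x) = -E (J x))
    {a c : g} (ha : E a = a) (hc : E c = c) :
    pplus E (J ⁅c, J a⁆) - pplus E (J ⁅a, J c⁆) = ⁅a, c⁆ := by
  have hEJa : E (J a) = -(J a) := by
    have h := hA a; rw [ha] at h; exact (neg_eq_iff_eq_neg.mpr h).symm
  have hEJc : E (J c) = -(J c) := by
    have h := hA c; rw [hc] at h; exact (neg_eq_iff_eq_neg.mpr h).symm
  have hbr : E ⁅a, c⁆ = ⁅a, c⁆ := plusBr hEi ha hc
  have hbr2 : E ⁅J a, J c⁆ = -⁅J a, J c⁆ := minusBr hEi hEJa hEJc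
  have hmain : J ⁅c, J a⁆ - J ⁅a, J c⁆ = ⁅a, c⁆ - ⁅J a, J c⁆ := by
    have hsk : ⁅c, J a⁆ = -⁅J a, c⁆ := (lie_skew _ _).symm
    have h := hJi a c
    rw [hsk, map_neg]
    have hcol : -J ⁅J a, c⁆ - J ⁅a, J c⁆ = -(J (⁅J a, c⁆ + ⁅a, J c⁆)) := by
      rw [map_add]; abel
    have h2 : ⁅J a, c⁆ + ⁅a, J c⁆ = J ⁅a, c⁆ - J ⁅J a, J c⁆ := by rw [h]; abel
    rw [hcol, h2, map_sub, hJ2, hJ2]; abel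
  rw [← map_sub, hmain, pplus_apply', map_sub, hbr, hbr2]; module

lemma keyJm (hJ2 : ∀ x : g, J (J x) = -x)
    (hJi : ∀ x y : g, J ⁅x, y⁆ = ⁅J x, y⁆ + ⁅x, J y⁆ + J ⁅J x, J y⁆)
    (hEi : ∀ x y : g, E ⁅x, y⁆ = ⁅E x, y⁆ + ⁅x, E y⁆ - E ⁅E x, E y⁆)
    (hA : ∀ x : g, J (E x) = -E (J x))
    {a c : g} (ha : E a = -a) (hc : E c = -c) :
    pminus E (J ⁅c, J a⁆) - pminus E (J ⁅a, J c⁆) = ⁅a, c⁆ := by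
  have hEJa : E (J a) = J a := by
    have h := hA a; rw [ha, map_neg] at h
    exact (neg_injective h).symm
  have hEJc : E (J c) = J c := by
    have h := hA c; rw [hc, map_neg] at h
    exact (neg_injective h).symm
  have hbr : E ⁅a, c⁆ = -⁅a, c⁆ := minusBr hEi ha hc
  have hbr2 : E ⁅J a, J c⁆ = ⁅J a, J c⁆ := plusBr hEi hEJa hEJc
  have hmain : J ⁅c, J a⁆ - J ⁅a, J c⁆ = ⁅a, c⁆ - ⁅J a, J c⁆ := by
    have hsk : ⁅c, J a⁆ = -⁅J a, c⁆ := (lie_skew _ _).symm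
    have h := hJi a c
    rw [hsk, map_neg]
    have hcol : -J ⁅J a, c⁆ - J ⁅a, J c⁆ = -(J (⁅J a, c⁆ + ⁅a, J c⁆)) := by
      rw [map_add]; abel
    have h2 : ⁅J a, c⁆ + ⁅a, J c⁆ = J ⁅a, c⁆ - J ⁅J a, J c⁆ := by rw [h]; abel
    rw [hcol, h2, map_sub, hJ2, hJ2]; abel
  rw [← map_sub, hmain, pminus_apply', map_sub, hbr, hbr2]; module

lemma conn_torsion (hJ2 : ∀ x : g, J (J x) = -x)
    (hJi : ∀ x y : g, J ⁅x, y⁆ = ⁅J x, y⁆ + ⁅x, J y⁆ + J ⁅J x, J y⁆)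
    (hE2 : ∀ x : g, E (E x) = x)
    (hEi : ∀ x y : g, E ⁅x, y⁆ = ⁅E x, y⁆ + ⁅x, E y⁆ - E ⁅E x, E y⁆)
    (hA : ∀ x : g, J (E x) = -E (J x)) (x y : g) :
    cpConn J E x y - cpConn J E y x = ⁅x, y⁆ := by
  have ha : E (pplus E x) = pplus E x := E_pplus hE2 x
  have hb : E (pminus E x) = -(pminus E x) := E_pminus hE2 x
  have hc : E (pplus E y) = pplus E y := E_pplus hE2 y
  have hd : E (pminus E y) = -(pminus E y) := E_pminus hE2 y
  have k1 := keyJ hJ2 hJi hEi hA ha hc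
  have k2 := keyJm hJ2 hJi hEi hA hb hd
  have h3 : pminus E ⁅pplus E y, pminus E x⁆ = -pminus E ⁅pminus E x, pplus E y⁆ := by
    rw [← lie_skew, map_neg]
  have h4 : pplus E ⁅pminus E y, pplus E x⁆ = -pplus E ⁅pplus E x, pminus E y⁆ := by
    rw [← lie_skew, map_neg]
  have h5 := pplus_add_pminus E ⁅pminus E x, pplus E y⁆
  have h6 := pplus_add_pminus E ⁅pplus E x, pminus E y⁆
  have hx := pplus_add_pminus E x
  have hy := pplus_add_pminus E y
  rw [cpConn_apply, cpConn_apply]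
  conv_rhs => rw [← hx, ← hy, lie_add, add_lie, add_lie, ← k1, ← k2, ← h5, ← h6]
  rw [h3, h4]
  abel

end core2

section core3
variable {J E : Module.End ℝ g}

lemma conn_E (hE2 : ∀ x : g, E (E x) = x) (x y : g) :
    cpConn J E x (E y) = E (cpConn J E x y) := by
  rw [cpConn_apply, cpConn_apply]
  simp only [pplus_E hE2, pminus_E hE2, E_pplus hE2, E_pminus hE2,
    map_add, map_neg, map_sub, lie_neg, neg_neg]

lemma conn_J (hJ2 : ∀ x : g, J (J x) = -x) (hA : ∀ x : g, J (E x) = -E (J x))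
    (x y : g) :
    cpConn J E x (J y) = J (cpConn J E x y) := by
  rw [cpConn_apply, cpConn_apply]
  simp only [pplus_J hA, pminus_J hA, hJ2, map_add, map_neg, map_sub,
    lie_neg, neg_neg]
  abel

lemma self_eq_neg_zero {z : g} (h : z = -z) : z = 0 := by
  have h2 : (2:ℝ) • z = 0 := by
    rw [two_smul]; nth_rewrite 2 [h]; simp
  have := smul_eq_zero.mp h2
  simpa using this.resolve_left (by norm_num)

lemma conn_unique {F : Module.End ℝ g}
    (hJ2 : ∀ x : g, J (J x) = -x)
    (hF2 : ∀ x : g, F (F x) = x)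
    (hAF : ∀ x : g, J (F x) = -F (J x))
    (D : g →ₗ[ℝ] Module.End ℝ g)
    (hsym : ∀ x y : g, D x y = D y x)
    (hDJ : ∀ x y : g, D x (J y) = J (D x y))
    (hDF : ∀ x y : g, D x (F y) = F (D x y)) :
    D = 0 := by
  have hFJ : ∀ x : g, F (J x) = -J (F x) := fun x =>
    (neg_eq_iff_eq_neg.mpr (hAF x)).symm
  have hpp : ∀ u v : g, F u = u → F v = v → D u v = 0 := by
    intro u v hu hv
    have hfix : F (D u v) = D u v := by rw [← hDF, hv]
    have hz1 : F (J (D u v)) = -(J (D u v)) := by rw [hFJ, hfix]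
    have hz2 : F (J (D u v)) = J (D u v) := by
      rw [← hDJ, hsym u (J v), ← hDF, hu, hsym]
    have h0 : J (D u v) = 0 := self_eq_neg_zero (hz2.symm.trans hz1)
    have h1 := congrArg J h0
    rw [hJ2, map_zero] at h1
    exact neg_eq_zero.mp h1
  have hmm : ∀ u v : g, F u = -u → F v = -v → D u v = 0 := by
    intro u v hu hv
    have hfix : F (D u v) = -(D u v) := by rw [← hDF, hv, map_neg]
    have hz1 : F (J (D u v)) = J (D u v) := by rw [hFJ, hfix, map_neg, neg_neg]
    have hz2 : F (J (D u v)) = -(J (D u v)) := by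
      rw [← hDJ, hsym u (J v), ← hDF, hu, map_neg, hsym]
    have h0 : J (D u v) = 0 := self_eq_neg_zero (hz1.symm.trans hz2)
    have h1 := congrArg J h0
    rw [hJ2, map_zero] at h1
    exact neg_eq_zero.mp h1
  have hpm : ∀ u v : g, F u = u → F v = -v → D u v = 0 := by
    intro u v hu hv
    have h1 : F (D u v) = -(D u v) := by rw [← hDF, hv, map_neg]
    have h2 : F (D u v) = D u v := by rw [hsym, ← hDF, hu, hsym]
    exact self_eq_neg_zero (h2.symm.trans h1)
  ext x y
  show D x y = 0
  have ha : F (pplus F x) = pplus F x := E_pplus hF2 x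
  have hb : F (pminus F x) = -(pminus F x) := E_pminus hF2 x
  have hc : F (pplus F y) = pplus F y := E_pplus hF2 y
  have hd : F (pminus F y) = -(pminus F y) := E_pminus hF2 y
  have expand : D x y = D (pplus F x) (pplus F y) + D (pplus F x) (pminus F y)
      + D (pminus F x) (pplus F y) + D (pminus F x) (pminus F y) := by
    conv_lhs => rw [← pplus_add_pminus F x, ← pplus_add_pminus F y]
    simp only [map_add, LinearMap.add_apply]
    abel
  rw [expand, hpp _ _ ha hc, hpm _ _ ha hd, hmm _ _ hb hd,
    hsym, hpm _ _ hc hb]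
  abel

end core3

/-- Let `{J,E}` be a complex product structure on a real Lie algebra `g`, with
associated torsion-free connection `∇ = cpConn J E`.  For `θ ∈ ℝ` the endomorphism
`E_θ := cos θ • E + sin θ • J E` is again a product structure anticommuting with `J`
(so `{J,E_θ}` is a complex product structure); moreover `∇` is parallel with respect
to `E_θ`, i.e. `∇ₓ (E_θ y) = E_θ (∇ₓ y)` for all `x y`, and consequently the
torsion-free connection associated to `{J,E_θ}` coincides with `∇`. -/
theorem cpConn_rotation_invariant (J E : Module.End ℝ g) (h : IsCPS J E) (θ : ℝ) :
    IsCPS J (Real.cos θ • E + Real.sin θ • (J * E)) ∧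
    (∀ x y : g,
      cpConn J E x ((Real.cos θ • E + Real.sin θ • (J * E)) y) =
        (Real.cos θ • E + Real.sin θ • (J * E)) (cpConn J E x y)) ∧
    cpConn J (Real.cos θ • E + Real.sin θ • (J * E)) = cpConn J E := by
  obtain ⟨⟨hJ2, hJi⟩, ⟨hE2, hne1, hne2, hEi⟩, hA⟩ := h
  set K := Real.cos θ • E + Real.sin θ • (J * E) with hKdef
  have hKapp : ∀ x : g, K x = Real.cos θ • E x + Real.sin θ • J (E x) := by
    intro x; simp [hKdef, LinearMap.add_apply, LinearMap.smul_apply, Module.End.mul_apply]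
  have hA' : ∀ x : g, E (J x) = -J (E x) := fun x =>
    (neg_eq_iff_eq_neg.mpr (hA x)).symm
  have hK2 : ∀ x : g, K (K x) = x := by
    intro x
    simp only [hKapp, map_add, map_smul, hE2, hA', hJ2, map_neg, smul_neg, neg_neg]
    match_scalars <;> nlinarith [Real.sin_sq_add_cos_sq θ]
  have hKJ : ∀ x : g, J (K x) = -K (J x) := by
    intro x
    simp only [hKapp, map_add, map_smul, hJ2, hA', map_neg, smul_neg, neg_neg, neg_add]
  have hJnontriv : ¬ (∀ x : g, x = 0) := by
    intro hall
    exact hne1 (LinearMap.ext fun x => ((hall (E x)).trans (hall x).symm))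
  have trivialize : ∀ x : g, J x = -(J x) → x = 0 := by
    intro x h1
    have hJx : J x = 0 := self_eq_neg_zero h1
    have h2 := hJ2 x
    rw [hJx, map_zero] at h2
    exact neg_eq_zero.mp h2.symm
  have hKne1 : K ≠ LinearMap.id := by
    intro heq
    apply hJnontriv
    intro x
    have h1 := hKJ x
    rw [heq] at h1
    simp only [LinearMap.id_coe, id_eq] at h1
    exact trivialize x h1
  have hKne2 : K ≠ -LinearMap.id := by
    intro heq
    apply hJnontriv
    intro x
    have h1 := hKJ x
    rw [heq] at h1
    simp only [LinearMap.neg_apply, LinearMap.id_coe, id_eq, map_neg, neg_neg] at h1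
    exact trivialize x h1.symm
  have tf : ∀ u v : g, ⁅u, v⁆ = cpConn J E u v - cpConn J E v u := fun u v =>
    (conn_torsion hJ2 hJi hE2 hEi hA u v).symm
  have hcE := conn_E (J := J) hE2
  have hcJ := conn_J (E := E) hJ2 hA
  have hpar : ∀ u v : g, cpConn J E u (K v) = K (cpConn J E u v) := by
    intro u v
    calc cpConn J E u (K v)
        = cpConn J E u (Real.cos θ • E v + Real.sin θ • J (E v)) := by rw [hKapp]
      _ = Real.cos θ • cpConn J E u (E v) + Real.sin θ • cpConn J E u (J (E v)) := by
          rw [map_add, map_smul, map_smul]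
      _ = Real.cos θ • E (cpConn J E u v) + Real.sin θ • J (E (cpConn J E u v)) := by
          rw [hcE, hcJ, hcE]
      _ = K (cpConn J E u v) := (hKapp _).symm
  have hKi : ∀ x y : g, K ⁅x, y⁆ = ⁅K x, y⁆ + ⁅x, K y⁆ - K ⁅K x, K y⁆ := by
    intro x y
    rw [tf x y, tf (K x) y, tf x (K y), tf (K x) (K y)]
    simp only [map_sub, hpar, hK2]
    abel
  have hCPS : IsCPS J K := ⟨⟨hJ2, hJi⟩, ⟨hK2, hKne1, hKne2, hKi⟩, hKJ⟩
  refine ⟨hCPS, hpar, ?_⟩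
  have tfK := conn_torsion hJ2 hJi hK2 hKi hKJ
  have hcEK := conn_E (J := J) (E := K) hK2
  have hcJK := conn_J (E := K) hJ2 hKJ
  have hD0 : cpConn J K - cpConn J E = 0 := by
    refine conn_unique hJ2 hK2 hKJ _ ?_ ?_ ?_
    · intro x y
      simp only [LinearMap.sub_apply]
      have h3 : cpConn J K x y - cpConn J K y x = cpConn J E x y - cpConn J E y x :=
        (tfK x y).trans (conn_torsion hJ2 hJi hE2 hEi hA x y).symm
      exact sub_eq_sub_iff_sub_eq_sub.mpr h3
    · intro x y
      simp only [LinearMap.sub_apply]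
      rw [hcJK, hcJ, map_sub]
    · intro x y
      simp only [LinearMap.sub_apply]
      rw [hcEK, hpar, map_sub]
  exact sub_eq_zero.mp hD0
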